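/- arXiv:0910.0045 — 5 statements merged into one kernel-verified Lean document; each statement's English description precedes it below -/
import Mathlib

section
/- For every integer t ≥ 0, the set {x ∈ X_i^* : H_i(x) − |x|_i ≤ t} is infinite. -/
open scoped ENNReal

/-- Finite strings over an alphabet with `i` letters. -/
abbrev Str (i : ℕ) : Type := List (Fin i)

/-- A set of strings is prefix-free: no element is a proper prefix of another. -/
def PrefixFree {i : ℕ} (S : Set (Str i)) : Prop :=
  ∀ x ∈ S, ∀ y ∈ S, x <+: y → x = y

/-- A self-delimiting machine over the alphabet with `i` letters: a partial computable
function on strings whose domain is prefix-free. -/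
structure Machine (i : ℕ) where
  f : Str i →. Str i
  partrec : Partrec f
  prefixFree : PrefixFree f.Dom

/-- Program-size complexity of `x` relative to the machine `T`:
the least length of a program `y` with `T(y) = x` (with `min ∅ = ∞`). -/
noncomputable def Hc {i : ℕ} (T : Machine i) (x : Str i) : ℝ≥0∞ :=
  sInf {n : ℝ≥0∞ | ∃ y : Str i, (y.length : ℝ≥0∞) = n ∧ x ∈ T.f y}

/-- `U` is a universal machine: it minimizes program-size complexity up to an
additive constant among all machines. -/
def IsUniversal {i : ℕ} (U : Machine i) : Prop :=
  ∀ T : Machine i, ∃ c : ℕ, ∀ x : Str i, Hc U x ≤ Hc T x + (c : ℝ≥0∞)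

/-- A set of strings is computably enumerable if it is the domain of a
partial computable function. -/
def CEset {i : ℕ} (A : Set (Str i)) : Prop :=
  ∃ f : Str i →. Str i, Partrec f ∧ A = f.Dom

/-- A Gödel numbering for `L`: a computable function into binary strings,
injective on `L`. -/
def GoedelNumbering {i : ℕ} (L : Set (Str i)) (g : Str i → Str 2) : Prop :=
  Computable g ∧ Set.InjOn g L

/-!
Over two distinct letters `a ≠ b` the words `aⁿb` form a prefix-free, decidable set, so the
machine `aⁿb ↦ aⁿb aⁿb` describes each of its outputs by a program of half its length.
Universality then gives `H(x) ≤ |x| / 2 + c`, which is `≤ |x| + t` once `|x| ≥ 2c`.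
-/

theorem Primrec.list_replicate_left {α : Type*} [Primcodable α] (a : α) :
    Primrec fun n : ℕ => List.replicate n a := by
  refine (Primrec.nat_rec₁ (f := fun _ l => a :: l) []
    (Primrec.list_cons.comp (Primrec.const a) Primrec.snd)).of_eq ?_
  intro n
  induction n with
  | zero => rfl
  | succ n ih => simp [List.replicate_succ, ih]

namespace Machine

variable {i : ℕ}

theorem Hc_le_length (T : Machine i) {x y : Str i} (h : x ∈ T.f y) : Hc T x ≤ y.length :=
  sInf_le ⟨y, rfl, h⟩

def ofPrimrec (p : Str i → Option (Str i)) (hp : Primrec p)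
    (hdom : PrefixFree {y | (p y).isSome}) : Machine i where
  f y := p y
  partrec := Computable.ofOption hp.to_comp
  prefixFree := by
    convert hdom
    ext y
    exact Part.ofOption_dom _

end Machine

theorem IsUniversal.Hc_le_length {i : ℕ} {U : Machine i} (hU : IsUniversal U) (T : Machine i) :
    ∃ c : ℕ, ∀ x y : Str i, x ∈ T.f y → Hc U x ≤ y.length + c := by
  obtain ⟨c, hc⟩ := hU T
  exact ⟨c, fun x y h => (hc x).trans (by gcongr; exact T.Hc_le_length h)⟩

section Codeword

variable {i : ℕ} (a b : Fin i)

def codeword (n : ℕ) : Str i :=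
  List.replicate n a ++ [b]

@[simp]
theorem length_codeword (n : ℕ) : (codeword a b n).length = n + 1 := by
  simp [codeword]

theorem primrec_codeword : Primrec (codeword a b) :=
  Primrec.list_append.comp (Primrec.list_replicate_left a) (Primrec.const [b])

theorem mem_range_codeword_iff (y : Str i) :
    y ∈ Set.range (codeword a b) ↔ y = codeword a b (y.length - 1) := by
  refine ⟨?_, fun h => ⟨_, h.symm⟩⟩
  rintro ⟨n, rfl⟩
  simp

variable {a b}

theorem codeword_prefix_codeword_iff (hab : a ≠ b) {m n : ℕ} :
    codeword a b m <+: codeword a b n ↔ m = n := by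
  refine ⟨fun h => ?_, fun h => h ▸ List.prefix_rfl⟩
  have hmn : m ≤ n := by simpa using h.length_le
  obtain ⟨k, rfl⟩ := Nat.exists_eq_add_of_le hmn
  cases k with
  | zero => rfl
  | succ k =>
    -- after the common `aᵐ`, the letter `b` would have to be a prefix of `a…`
    rw [codeword, codeword, List.replicate_add, List.append_assoc,
      List.prefix_append_right_inj, List.replicate_succ, List.cons_append,
      List.singleton_prefix_cons_iff] at h
    exact absurd h.symm hab

theorem prefixFree_range_codeword (hab : a ≠ b) : PrefixFree (Set.range (codeword a b)) := by
  rintro _ ⟨m, rfl⟩ _ ⟨n, rfl⟩ h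
  rw [(codeword_prefix_codeword_iff hab).mp h]

end Codeword

section Doubling

variable {i : ℕ} {a b : Fin i}

def doubleCodeword (a b : Fin i) (y : Str i) : Option (Str i) :=
  if y = codeword a b (y.length - 1) then some (y ++ y) else none

theorem primrec_doubleCodeword : Primrec (doubleCodeword a b) :=
  Primrec.ite
    (PrimrecRel.comp Primrec.eq Primrec.id
      ((primrec_codeword a b).comp (Primrec.pred.comp Primrec.list_length)))
    (Primrec.option_some.comp (Primrec.list_append.comp Primrec.id Primrec.id))
    (Primrec.const none)

theorem setOf_isSome_doubleCodeword :
    {y | (doubleCodeword a b y).isSome} = Set.range (codeword a b) := by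
  ext y
  rw [Set.mem_ofPred_eq, mem_range_codeword_iff, doubleCodeword]
  split_ifs with h
  · exact iff_of_true rfl h
  · exact iff_of_false (by simp) h

def doublingMachine (hab : a ≠ b) : Machine i :=
  Machine.ofPrimrec (doubleCodeword a b) primrec_doubleCodeword
    (setOf_isSome_doubleCodeword ▸ prefixFree_range_codeword hab)

theorem codeword_append_self_mem_doublingMachine (hab : a ≠ b) (n : ℕ) :
    codeword a b n ++ codeword a b n ∈ (doublingMachine hab).f (codeword a b n) := by
  simp [doublingMachine, Machine.ofPrimrec, doubleCodeword]

end Doubling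

/-- For every integer `t ≥ 0`, the set `{x ∈ Xᵢ* : Hᵢ(x) − |x|ᵢ ≤ t}` is infinite. -/
theorem stmt_0 {i : ℕ} (hi : 2 ≤ i) (U : Machine i) (hU : IsUniversal U) (t : ℕ) :
    {x : Str i | Hc U x ≤ (x.length : ℝ≥0∞) + (t : ℝ≥0∞)}.Infinite := by
  obtain ⟨a, b, hab⟩ : ∃ a b : Fin i, a ≠ b := ⟨⟨0, by omega⟩, ⟨1, hi⟩, by simp [Fin.ext_iff]⟩
  obtain ⟨c, hc⟩ := hU.Hc_le_length (doublingMachine hab)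
  let w n := codeword a b (n + c)
  refine Set.infinite_of_injective_forall_mem (f := fun n => w n ++ w n) ?_ fun n => ?_
  · intro m n h
    have := congrArg List.length h
    simp only [w, List.length_append, length_codeword] at this
    omega
  · calc Hc U (w n ++ w n)
        ≤ (w n).length + c := hc _ _ (codeword_append_self_mem_doublingMachine hab _)
      _ ≤ (w n ++ w n).length + t := by
        have hw : (w n).length = n + c + 1 := length_codeword a b _
        rw [List.length_append, hw]
        exact_mod_cast (by omega : n + c + 1 + c ≤ n + c + 1 + (n + c + 1) + t)
end

section
/- Let N ≥ 0 be a fixed integer, T ⊆ X_i^* be computably enumerable, and g : T → X_2^* be a Gödel numbering. Then lim_{n→∞} i^{−n} · card{x ∈ T : |x|_i = n and δ_g(x) ≤ N} = 0. -/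
open scoped ENNReal

/-- `δ_g(x) = H₂(g(x)) − ⌈log₂(i)·|x|ᵢ⌉`, as an extended real. -/
noncomputable def deltaG {i : ℕ} (U2 : Machine 2) (g : Str i → Str 2) (x : Str i) : EReal :=
  (Hc U2 (g x) : EReal) - ((⌈Real.logb 2 i * (x.length : ℝ)⌉ : ℝ) : EReal)

/-!
By Kraft's inequality for the prefix-free domain of `U2`, distinct binary strings `g x` have
distinct shortest programs, so `∑ₓ 2^(-H₂(g x)) ≤ 1` over `x ∈ T`. If `δ_g(x) ≤ N` and `|x| = n`,
then `H₂(g x) ≤ K n := ⌈n log₂ i⌉ + N`, hence `∑ₙ cₙ 2^(-K n) ≤ 1` for the counts `cₙ` in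
question. The terms of a convergent series tend to `0`, and `2^(K n) ≤ 2^(N+1) iⁿ`.
-/

open Finset

section Kraft

variable {k : ℕ}

def extensionsOfLength (L : ℕ) (p : Str k) : Finset (Str k) :=
  (univ : Finset (List.Vector (Fin k) (L - p.length))).image (p ++ ·.toList)

lemma card_extensionsOfLength (L : ℕ) (p : Str k) :
    (extensionsOfLength L p).card = k ^ (L - p.length) := by
  rw [extensionsOfLength, card_image_of_injective _ fun a b h =>
    List.Vector.toList_injective (List.append_cancel_left h)]
  simp [card_vector]

lemma prefix_of_mem_extensionsOfLength {L : ℕ} {p x : Str k}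
    (hx : x ∈ extensionsOfLength L p) : p <+: x := by
  obtain ⟨t, -, rfl⟩ := mem_image.1 hx
  exact List.prefix_append _ _

lemma length_of_mem_extensionsOfLength {L : ℕ} {p x : Str k} (hp : p.length ≤ L)
    (hx : x ∈ extensionsOfLength L p) : x.length = L := by
  obtain ⟨t, -, rfl⟩ := mem_image.1 hx
  simp [hp]

lemma PrefixFree.disjoint_extensionsOfLength {S : Set (Str k)} (hS : PrefixFree S)
    {p q : Str k} (hp : p ∈ S) (hq : q ∈ S) (hpq : p ≠ q) (L : ℕ) :
    Disjoint (extensionsOfLength L p) (extensionsOfLength L q) := by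
  refine disjoint_left.2 fun x hxp hxq => ?_
  have hpx := prefix_of_mem_extensionsOfLength hxp
  have hqx := prefix_of_mem_extensionsOfLength hxq
  rcases le_total p.length q.length with h | h
  · exact hpq (hS p hp q hq (List.prefix_of_prefix_length_le hpx hqx h))
  · exact hpq (hS q hq p hp (List.prefix_of_prefix_length_le hqx hpx h)).symm

lemma card_le_of_forall_length_eq {F : Finset (Str k)} {L : ℕ}
    (h : ∀ x ∈ F, x.length = L) : F.card ≤ k ^ L :=
  calc F.card ≤ ((univ : Finset (List.Vector (Fin k) L)).image List.Vector.toList).card :=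
        card_le_card fun x hx => mem_image.2 ⟨⟨x, h x hx⟩, mem_univ _, rfl⟩
    _ ≤ k ^ L := card_image_le.trans (by simp [card_vector])

/-- Kraft's inequality, cleared of denominators: the extensions of length `L` of the words of a
prefix-free set are pairwise disjoint. -/
lemma PrefixFree.sum_pow_sub_length_le {S : Set (Str k)} (hS : PrefixFree S) {F : Finset (Str k)}
    (hF : ↑F ⊆ S) {L : ℕ} (hL : ∀ p ∈ F, p.length ≤ L) :
    ∑ p ∈ F, k ^ (L - p.length) ≤ k ^ L :=
  calc ∑ p ∈ F, k ^ (L - p.length) = (F.biUnion (extensionsOfLength L)).card := by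
        rw [card_biUnion fun p hp q hq hpq =>
          hS.disjoint_extensionsOfLength (hF hp) (hF hq) hpq L]
        simp only [card_extensionsOfLength]
    _ ≤ k ^ L := card_le_of_forall_length_eq fun x hx => by
        obtain ⟨p, hp, hxp⟩ := mem_biUnion.1 hx
        exact length_of_mem_extensionsOfLength (hL p hp) hxp

theorem PrefixFree.sum_inv_pow_length_le_one (hk : 0 < k) {S : Set (Str k)} (hS : PrefixFree S)
    {F : Finset (Str k)} (hF : ↑F ⊆ S) : ∑ p ∈ F, ((k : ℝ)⁻¹) ^ p.length ≤ 1 := by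
  set L := F.sup List.length
  have hL : ∀ p ∈ F, p.length ≤ L := fun p hp => le_sup hp
  have hk' : (k : ℝ) ≠ 0 := by positivity
  calc ∑ p ∈ F, ((k : ℝ)⁻¹) ^ p.length
        = ((∑ p ∈ F, k ^ (L - p.length) : ℕ) : ℝ) / (k : ℝ) ^ L := by
          push_cast
          rw [sum_div]
          refine sum_congr rfl fun p hp => ?_
          rw [pow_sub₀ _ hk' (hL p hp), inv_pow]
          field_simp
    _ ≤ 1 := (div_le_one (by positivity)).2 (by exact_mod_cast hS.sum_pow_sub_length_le hF hL)

end Kraft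

section Complexity

variable {k : ℕ}

lemma exists_program_of_Hc_le {U : Machine k} {y : Str k} {m : ℕ} (h : Hc U y ≤ m) :
    ∃ p, y ∈ U.f p ∧ p.length ≤ m := by
  have hlt : Hc U y < (m + 1 : ℕ) := h.trans_lt (by exact_mod_cast m.lt_succ_self)
  obtain ⟨-, ⟨p, rfl, hp⟩, hlen⟩ := sInf_lt_iff.1 hlt
  exact ⟨p, hp, Nat.lt_succ_iff.1 (by exact_mod_cast hlen)⟩

/-- Kraft's inequality for program-size complexity: distinct outputs have distinct programs. -/
theorem sum_inv_pow_le_one_of_Hc_le (hk : 0 < k) (U : Machine k) {α : Type*} {F : Finset α}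
    {f : α → Str k} (hf : Set.InjOn f F) {m : α → ℕ} (hm : ∀ a ∈ F, Hc U (f a) ≤ m a) :
    ∑ a ∈ F, ((k : ℝ)⁻¹) ^ m a ≤ 1 := by
  choose! prog hprog hlen using fun a ha => exists_program_of_Hc_le (hm a ha)
  have hinj : Set.InjOn prog F := fun a ha b hb h =>
    hf ha hb (Part.mem_unique (hprog a ha) (h ▸ hprog b hb))
  calc ∑ a ∈ F, ((k : ℝ)⁻¹) ^ m a ≤ ∑ a ∈ F, ((k : ℝ)⁻¹) ^ (prog a).length :=
        sum_le_sum fun a ha => pow_le_pow_of_le_one (by positivity)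
          (inv_le_one_of_one_le₀ (by exact_mod_cast hk)) (hlen a ha)
    _ = ∑ p ∈ F.image prog, ((k : ℝ)⁻¹) ^ p.length :=
        (sum_image (f := fun p => ((k : ℝ)⁻¹) ^ p.length) hinj).symm
    _ ≤ 1 := U.prefixFree.sum_inv_pow_length_le_one hk fun p hp => by
        obtain ⟨a, ha, rfl⟩ := mem_image.1 hp
        exact Part.dom_iff_mem.2 ⟨_, hprog a ha⟩

theorem summable_ncard_mul_inv_pow (hk : 0 < k) (U : Machine k) {i : ℕ} {T : Set (Str i)}
    {f : Str i → Str k} (hf : Set.InjOn f T) (K : ℕ → ℕ) :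
    Summable fun n =>
      ({x | x ∈ T ∧ x.length = n ∧ Hc U (f x) ≤ K n}.ncard : ℝ) * ((k : ℝ)⁻¹) ^ K n := by
  have hfin : ∀ n, {x | x ∈ T ∧ x.length = n ∧ Hc U (f x) ≤ K n}.Finite := fun n =>
    (List.finite_length_eq (Fin i) n).subset fun _ hx => hx.2.1
  set B : ℕ → Finset (Str i) := fun n => (hfin n).toFinset
  refine summable_of_sum_le (c := 1) (fun n => by positivity) fun s => ?_
  have hB : ∀ nx ∈ s.sigma B, nx.2 ∈ T ∧ nx.2.length = nx.1 ∧ Hc U (f nx.2) ≤ K nx.1 :=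
    fun _ hnx => (hfin _).mem_toFinset.1 (mem_sigma.1 hnx).2
  calc ∑ n ∈ s, ({x | x ∈ T ∧ x.length = n ∧ Hc U (f x) ≤ K n}.ncard : ℝ) * ((k : ℝ)⁻¹) ^ K n
        = ∑ nx ∈ s.sigma B, ((k : ℝ)⁻¹) ^ K nx.1 := by
          rw [sum_sigma]
          refine sum_congr rfl fun n _ => ?_
          dsimp only
          rw [sum_const, nsmul_eq_mul, Set.ncard_eq_toFinset_card _ (hfin n)]
    _ ≤ 1 := by
      refine sum_inv_pow_le_one_of_Hc_le hk U (f := fun nx => f nx.2)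
        (fun nx hnx ny hny h => ?_) fun nx hnx => (hB nx hnx).2.2
      have hxy : nx.2 = ny.2 := hf (hB nx hnx).1 (hB ny hny).1 h
      exact Sigma.ext ((hB nx hnx).2.1.symm.trans (hxy ▸ (hB ny hny).2.1)) (heq_of_eq hxy)

end Complexity

lemma Hc_le_of_deltaG_le {i : ℕ} {U2 : Machine 2} {g : Str i → Str 2} {N : ℕ} {x : Str i}
    (h : deltaG U2 g x ≤ N) :
    Hc U2 (g x) ≤ ((⌈Real.logb 2 i * x.length⌉.toNat + N : ℕ) : ℝ≥0∞) := by
  set r := ⌈Real.logb 2 i * (x.length : ℝ)⌉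
  have hH : (Hc U2 (g x) : EReal) ≤ N + ((r : ℝ) : EReal) :=
    (EReal.sub_le_iff_le_add (Or.inl (EReal.coe_ne_bot _)) (Or.inl (EReal.coe_ne_top _))).1 h
  have hr : (N : ℝ) + r ≤ ((r.toNat + N : ℕ) : ℝ) := by
    have h0 : (r : ℝ) ≤ r.toNat := by exact_mod_cast Int.self_le_toNat r
    push_cast
    linarith
  rw [← EReal.coe_ennreal_le_coe_ennreal_iff]
  calc (Hc U2 (g x) : EReal) ≤ N + ((r : ℝ) : EReal) := hH
    _ = (((N : ℝ) + r : ℝ) : EReal) := by norm_cast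
    _ ≤ (((r.toNat + N : ℕ) : ℝ) : EReal) := EReal.coe_le_coe_iff.2 hr
    _ = (((r.toNat + N : ℕ) : ℝ≥0∞) : EReal) := by norm_cast

lemma two_pow_toNat_ceil_logb_mul_le {i : ℕ} (hi : 0 < i) (n : ℕ) :
    (2 : ℝ) ^ ⌈Real.logb 2 i * n⌉.toNat ≤ 2 * (i : ℝ) ^ n := by
  have hlog : 0 ≤ Real.logb 2 i * n :=
    mul_nonneg (Real.logb_nonneg one_lt_two (by exact_mod_cast hi)) n.cast_nonneg
  have hr : (⌈Real.logb 2 i * n⌉.toNat : ℝ) ≤ Real.logb 2 i * n + 1 := by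
    rw [← Int.cast_natCast, Int.toNat_eq_max, Int.cast_max, Int.cast_zero]
    exact max_le (Int.ceil_lt_add_one _).le (by linarith)
  calc (2 : ℝ) ^ ⌈Real.logb 2 i * n⌉.toNat
        = (2 : ℝ) ^ (⌈Real.logb 2 i * n⌉.toNat : ℝ) := (Real.rpow_natCast 2 _).symm
    _ ≤ (2 : ℝ) ^ (Real.logb 2 i * n + 1) := Real.rpow_le_rpow_of_exponent_le one_le_two hr
    _ = 2 * (i : ℝ) ^ n := by
        rw [Real.rpow_add two_pos, Real.rpow_one, Real.rpow_mul zero_le_two,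
          Real.rpow_logb two_pos (by norm_num) (by exact_mod_cast hi), Real.rpow_natCast, mul_comm]

lemma inv_pow_le_two_pow_mul_inv_two_pow {i : ℕ} (hi : 0 < i) (N n : ℕ) :
    ((i : ℝ) ^ n)⁻¹ ≤ 2 ^ (N + 1) * 2⁻¹ ^ (⌈Real.logb 2 i * n⌉.toNat + N) :=
  calc ((i : ℝ) ^ n)⁻¹ ≤ (2⁻¹ * 2 ^ ⌈Real.logb 2 i * n⌉.toNat)⁻¹ :=
        inv_anti₀ (by positivity) (by linarith [two_pow_toNat_ceil_logb_mul_le hi n])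
    _ = 2 ^ (N + 1) * 2⁻¹ ^ (⌈Real.logb 2 i * n⌉.toNat + N) := by
        rw [inv_pow, pow_add (2 : ℝ) _ N, pow_succ]
        field_simp

theorem stmt_6_general {i : ℕ} (hi : 2 ≤ i) (U2 : Machine 2)
    (N : ℕ) (T : Set (Str i))
    (g : Str i → Str 2) (hg : GoedelNumbering T g) :
    Filter.Tendsto
      (fun n : ℕ =>
        (Set.ncard {x : Str i | x ∈ T ∧ x.length = n ∧ deltaG U2 g x ≤ (N : EReal)} : ℝ)
          / (i : ℝ) ^ n)
      Filter.atTop (nhds 0) := by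
  set A : ℕ → Set (Str i) := fun n => {x | x ∈ T ∧ x.length = n ∧ deltaG U2 g x ≤ (N : EReal)}
  set K : ℕ → ℕ := fun n => ⌈Real.logb 2 i * n⌉.toNat + N
  set B : ℕ → Set (Str i) := fun n => {x | x ∈ T ∧ x.length = n ∧ Hc U2 (g x) ≤ K n}
  have hB : Filter.Tendsto (fun n => ((B n).ncard : ℝ) * 2⁻¹ ^ K n) Filter.atTop (nhds 0) := by
    simpa only [Nat.cast_ofNat] using
      (summable_ncard_mul_inv_pow two_pos U2 hg.2 K).tendsto_atTop_zero
  refine squeeze_zero (fun n => by positivity) (fun n => ?_)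
    (by simpa only [mul_zero] using hB.const_mul (2 ^ (N + 1)))
  have hAB : (A n).ncard ≤ (B n).ncard :=
    Set.ncard_le_ncard (fun x ⟨hxT, hlen, hδ⟩ => ⟨hxT, hlen, hlen ▸ Hc_le_of_deltaG_le hδ⟩)
      ((List.finite_length_eq (Fin i) n).subset fun _ hx => hx.2.1)
  calc ((A n).ncard : ℝ) / (i : ℝ) ^ n = (A n).ncard * ((i : ℝ) ^ n)⁻¹ := div_eq_mul_inv _ _
    _ ≤ (B n).ncard * (2 ^ (N + 1) * 2⁻¹ ^ K n) :=
        mul_le_mul (by exact_mod_cast hAB) (inv_pow_le_two_pow_mul_inv_two_pow (by omega) N n)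
          (by positivity) (by positivity)
    _ = 2 ^ (N + 1) * ((B n).ncard * 2⁻¹ ^ K n) := by ring

/-- For fixed `N ≥ 0`, a c.e. set `T` and a Gödel numbering `g` for `T`,
`lim_{n→∞} i^{−n}·card{x ∈ T : |x|ᵢ = n, δ_g(x) ≤ N} = 0`. -/
theorem stmt_6 {i : ℕ} (hi : 2 ≤ i) (U2 : Machine 2) (hU2 : IsUniversal U2)
    (N : ℕ) (T : Set (Str i)) (hT : CEset T)
    (g : Str i → Str 2) (hg : GoedelNumbering T g) :
    Filter.Tendsto
      (fun n : ℕ =>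
        (Set.ncard {x : Str i | x ∈ T ∧ x.length = n ∧ deltaG U2 g x ≤ (N : EReal)} : ℝ)
          / (i : ℝ) ^ n)
      Filter.atTop (nhds 0) :=
  stmt_6_general hi U2 N T g hg
end

section
/- Let g : X_i^* → X_2^* be a Gödel numbering. Then there exists an integer N such that for every n ≥ 1 the set {x ∈ X_i^* : |x|_i = n and ρ^1_g(x) ≤ N} is all of X_i^n; in particular lim_{n→∞} i^{−n} · card{x ∈ X_i^* : |x|_i = n and ρ^1_g(x) ≤ N} = 1 ≠ 0, so ρ^1_g does not satisfy the density-vanishing condition. -/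
open scoped ENNReal

/-- `ρ¹_g(x) = H₂(g(x))/|x|ᵢ` for `x ≠ λ`, and `0` otherwise. -/
noncomputable def rho1G {i : ℕ} (U2 : Machine 2) (g : Str i → Str 2) (x : Str i) : ℝ≥0∞ :=
  if x = [] then 0 else Hc U2 (g x) / (x.length : ℝ≥0∞)

/-- `ρ¹ᵢ(x) = Hᵢ(x)/|x|ᵢ` for `x ≠ λ`, and `0` otherwise. -/
noncomputable def rho1I {i : ℕ} (U : Machine i) (x : Str i) : ℝ≥0∞ :=
  if x = [] then 0 else Hc U x / (x.length : ℝ≥0∞)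

/-- `ρ²_g(x) = H₂(g(x))/⌈log_i(|x|ᵢ)⌉` for `|x|ᵢ > 1`, and `0` otherwise. -/
noncomputable def rho2G {i : ℕ} (U2 : Machine 2) (g : Str i → Str 2) (x : Str i) : ℝ≥0∞ :=
  if x.length ≤ 1 then 0 else Hc U2 (g x) / ((⌈Real.logb i (x.length : ℝ)⌉₊ : ℕ) : ℝ≥0∞)

/-- `ρ²ᵢ(x) = Hᵢ(x)/⌈log_i(|x|ᵢ)⌉` for `|x|ᵢ > 1`, and `0` otherwise. -/
noncomputable def rho2I {i : ℕ} (U : Machine i) (x : Str i) : ℝ≥0∞ :=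
  if x.length ≤ 1 then 0 else Hc U x / ((⌈Real.logb i (x.length : ℝ)⌉₊ : ℕ) : ℝ≥0∞)


/-!
Encode a string over `Xᵢ` in binary by writing each letter `a < i` as `0ᵃ1` and closing with
the terminator `0ⁱ1`. This code is prefix-free, decodable by a finite automaton, and has length
at most `i·|x| + i + 1`. So `y ↦ g(decode y)` is a machine over `X₂`, and universality of `U₂`
gives `H₂(g(x)) ≤ i·|x| + i + 1 + c ≤ (2i + 1 + c)·|x|` for `x ≠ λ`: every `ρ¹_g(x)` is at most
`N = 2i + 1 + c`.
-/

def unaryBlock (k : ℕ) : Str 2 :=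
  List.replicate k 0 ++ [1]

@[simp]
theorem length_unaryBlock (k : ℕ) : (unaryBlock k).length = k + 1 := by
  simp [unaryBlock]

def unaryEncode (i : ℕ) (x : Str i) : Str 2 :=
  x.flatMap (fun a : Fin i => unaryBlock a) ++ unaryBlock i

theorem length_unaryEncode_le (i : ℕ) (x : Str i) :
    (unaryEncode i x).length ≤ i * x.length + i + 1 := by
  have hblocks : (x.flatMap fun a : Fin i => unaryBlock a).length ≤ i * x.length := by
    induction x with
    | nil => simp
    | cons a t ih =>
      simp only [List.flatMap_cons, List.length_append, length_unaryBlock]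
      have := a.2
      rw [List.length_cons, Nat.mul_succ]
      omega
  simp only [unaryEncode, List.length_append, length_unaryBlock]
  omega

/-- A state `some (k, acc, done)` has read `k` zeros of the current block, the decoded letters
`acc` in reverse, and whether the terminator has been read; `none` means the input was rejected. -/
def unaryDecodeStep (i : ℕ) (s : Option (ℕ × List ℕ × Bool)) (b : Fin 2) :
    Option (ℕ × List ℕ × Bool) :=
  s.bind fun p =>
    if p.2.2 = true then none
    else if (b : ℕ) = 0 then
      (if p.1 + 1 ≤ i then some (p.1 + 1, p.2.1, false) else none)
    else if p.1 < i then some (0, p.1 :: p.2.1, false) else some (0, p.2.1, true)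

def unaryDecode (i : ℕ) (y : Str 2) : Option (List ℕ) :=
  (y.foldl (unaryDecodeStep i) (some (0, [], false))).bind fun p =>
    if p.2.2 = true then some p.2.1.reverse else none

section UnaryDecode

variable (i : ℕ)

theorem foldl_unaryDecodeStep_none (l : Str 2) : l.foldl (unaryDecodeStep i) none = none := by
  induction l with
  | nil => rfl
  | cons b t ih => simpa [unaryDecodeStep] using ih

theorem foldl_unaryDecodeStep_replicate_zero {k z : ℕ} (acc : List ℕ) (h : z + k ≤ i) :
    (List.replicate k (0 : Fin 2)).foldl (unaryDecodeStep i) (some (z, acc, false))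
      = some (z + k, acc, false) := by
  induction k generalizing z with
  | zero => rfl
  | succ k ih =>
    have hstep : unaryDecodeStep i (some (z, acc, false)) 0 = some (z + 1, acc, false) := by
      simp [unaryDecodeStep, show z < i by omega]
    rw [List.replicate_succ, List.foldl_cons, hstep, ih (by omega), Nat.add_right_comm]
    rfl

theorem foldl_unaryDecodeStep_flatMap (x : Str i) (acc : List ℕ) :
    (x.flatMap fun a : Fin i => unaryBlock a).foldl (unaryDecodeStep i)
      (some (0, acc, false)) = some (0, (x.map Fin.val).reverse ++ acc, false) := by
  induction x generalizing acc with
  | nil => rfl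
  | cons a t ih =>
    rw [List.flatMap_cons, List.foldl_append, unaryBlock, List.foldl_append,
      foldl_unaryDecodeStep_replicate_zero i acc (by omega)]
    simp [unaryDecodeStep, a.2, ih]

theorem unaryDecode_unaryEncode (x : Str i) :
    unaryDecode i (unaryEncode i x) = some (x.map Fin.val) := by
  rw [unaryDecode, unaryEncode, List.foldl_append, foldl_unaryDecodeStep_flatMap, unaryBlock,
    List.foldl_append, foldl_unaryDecodeStep_replicate_zero i _ (Nat.zero_add i).le]
  simp [unaryDecodeStep]

/-- Once the terminator has been read, every further bit is rejected. -/
theorem eq_of_isPrefix_of_isSome_unaryDecode {y y' : Str 2} (hy : (unaryDecode i y).isSome)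
    (hy' : (unaryDecode i y').isSome) (hp : y <+: y') : y = y' := by
  obtain ⟨_ | ⟨b, t⟩, rfl⟩ := hp
  · simp
  · exfalso
    simp only [unaryDecode, List.foldl_append, List.foldl_cons] at hy hy'
    obtain ⟨p, hfold⟩ := Option.isSome_iff_exists.1 (Option.isSome_of_isSome_bind hy)
    rw [hfold] at hy hy'
    have hdone : p.2.2 = true := by
      by_contra h
      simp [h] at hy
    simp [unaryDecodeStep, hdone, foldl_unaryDecodeStep_none] at hy'

theorem primrec₂_unaryDecodeStep : Primrec₂ (unaryDecodeStep i) := by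
  let α := (Option (ℕ × List ℕ × Bool) × Fin 2) × (ℕ × List ℕ × Bool)
  have hzeros : Primrec fun x : α => x.2.1 := Primrec.fst.comp .snd
  have hacc : Primrec fun x : α => x.2.2.1 := Primrec.fst.comp (Primrec.snd.comp .snd)
  have hdone : Primrec fun x : α => x.2.2.2 := Primrec.snd.comp (Primrec.snd.comp .snd)
  have hbit : Primrec fun x : α => ((x.1.2 : Fin 2) : ℕ) :=
    Primrec.fin_val.comp (Primrec.snd.comp .fst)
  have hbody : Primrec₂ fun (a : Option (ℕ × List ℕ × Bool) × Fin 2) (p : ℕ × List ℕ × Bool) =>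
      if p.2.2 = true then none
      else if ((a.2 : Fin 2) : ℕ) = 0 then
        (if p.1 + 1 ≤ i then some (p.1 + 1, p.2.1, false) else none)
      else if p.1 < i then some (0, p.1 :: p.2.1, false) else some (0, p.2.1, true) := by
    refine Primrec.ite (Primrec.eq.comp hdone (.const true)) (.const none) ?_
    refine Primrec.ite (Primrec.eq.comp hbit (.const 0)) ?_ ?_
    · refine Primrec.ite (Primrec.nat_le.comp (Primrec.succ.comp hzeros) (.const i)) ?_
        (.const none)
      exact Primrec.option_some.comp ((Primrec.succ.comp hzeros).pair (hacc.pair (.const false)))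
    · refine Primrec.ite (Primrec.nat_lt.comp hzeros (.const i)) ?_ ?_
      · exact Primrec.option_some.comp
          ((Primrec.const 0).pair ((Primrec.list_cons.comp hzeros hacc).pair (.const false)))
      · exact Primrec.option_some.comp ((Primrec.const 0).pair (hacc.pair (.const true)))
  exact Primrec.option_bind Primrec.fst hbody

theorem primrec_unaryDecode : Primrec (unaryDecode i) := by
  have hfold : Primrec fun y : Str 2 => y.foldl (unaryDecodeStep i) (some (0, [], false)) :=
    Primrec.list_foldl .id (.const _)
      ((primrec₂_unaryDecodeStep i).comp (Primrec.fst.comp .snd) (Primrec.snd.comp .snd)).to₂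
  have hfinish : Primrec₂ fun (_ : Str 2) (p : ℕ × List ℕ × Bool) =>
      if p.2.2 = true then some p.2.1.reverse else none :=
    Primrec.ite (Primrec.eq.comp (Primrec.snd.comp (Primrec.snd.comp .snd)) (.const true))
      (Primrec.option_some.comp
        (Primrec.list_reverse.comp (Primrec.fst.comp (Primrec.snd.comp .snd))))
      (.const none)
  exact Primrec.option_bind hfold hfinish

end UnaryDecode

theorem exists_machine_apply_unaryEncode {i : ℕ} (hi : 0 < i) {f : Str i → Str 2}
    (hf : Computable f) : ∃ T : Machine 2, ∀ x : Str i, f x ∈ T.f (unaryEncode i x) := by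
  -- decoded letters are already `< i`; reducing mod `i` only makes the map total
  let toFin : ℕ → Fin i := fun a => ⟨a % i, Nat.mod_lt a hi⟩
  have htoFin : Primrec toFin :=
    Primrec.fin_val_iff.1 (Primrec.nat_mod.comp .id (.const i))
  let F : Str 2 → Option (Str 2) := fun y => (unaryDecode i y).map fun l => f (l.map toFin)
  have hF : Computable F :=
    Computable.option_map (primrec_unaryDecode i).to_comp
      (hf.comp (Primrec.list_map .snd (htoFin.comp .snd).to₂).to_comp).to₂
  let T : Str 2 →. Str 2 := fun y => F y
  have hdom : ∀ y ∈ T.Dom, (unaryDecode i y).isSome := by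
    intro y hy
    rw [PFun.mem_dom] at hy
    obtain ⟨z, hz⟩ := hy
    simp only [T, F, Part.mem_ofOption, Option.mem_def, Option.map_eq_some_iff] at hz
    obtain ⟨l, hl, -⟩ := hz
    simp [hl]
  refine ⟨⟨T, Computable.ofOption hF, fun y hy y' hy' hp =>
    eq_of_isPrefix_of_isSome_unaryDecode i (hdom y hy) (hdom y' hy') hp⟩, fun x => ?_⟩
  have hx : (x.map Fin.val).map toFin = x := by
    rw [List.map_map]
    conv_rhs => rw [← List.map_id x]
    exact List.map_congr_left fun a _ => Fin.ext (Nat.mod_eq_of_lt a.2)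
  simp [T, F, unaryDecode_unaryEncode, hx]

theorem Hc_le_length_of_mem {i : ℕ} {T : Machine i} {x y : Str i} (h : x ∈ T.f y) :
    Hc T x ≤ y.length :=
  sInf_le ⟨y, rfl, h⟩

theorem exists_Hc_le_mul_length {i : ℕ} (hi : 0 < i) {U : Machine 2} (hU : IsUniversal U)
    {f : Str i → Str 2} (hf : Computable f) :
    ∃ N : ℕ, ∀ x : Str i, x ≠ [] → Hc U (f x) ≤ N * x.length := by
  obtain ⟨T, hT⟩ := exists_machine_apply_unaryEncode hi hf
  obtain ⟨c, hc⟩ := hU T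
  refine ⟨2 * i + 1 + c, fun x hx => ?_⟩
  have hlen : 1 ≤ x.length := List.length_pos_iff.2 hx
  have hcode : (unaryEncode i x).length + c ≤ (2 * i + 1 + c) * x.length := by
    have := length_unaryEncode_le i x
    nlinarith
  calc Hc U (f x) ≤ Hc T (f x) + c := hc (f x)
    _ ≤ (unaryEncode i x).length + c := by gcongr; exact Hc_le_length_of_mem (hT x)
    _ ≤ ((2 * i + 1 + c) * x.length : ℕ) := by exact_mod_cast hcode
    _ = (2 * i + 1 + c : ℕ) * x.length := by push_cast; rfl

theorem rho1G_le_of_Hc_le {i : ℕ} {U : Machine 2} {g : Str i → Str 2} {x : Str i} {N : ℝ≥0∞}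
    (h : x ≠ [] → Hc U (g x) ≤ N * x.length) : rho1G U g x ≤ N := by
  unfold rho1G
  split_ifs with hx
  · exact zero_le
  · exact ENNReal.div_le_of_le_mul (h hx)

theorem ncard_setOf_length_eq (i n : ℕ) : {x : Str i | x.length = n}.ncard = i ^ n := by
  rw [← Nat.card_coe_set_eq]
  change Nat.card (List.Vector (Fin i) n) = i ^ n
  rw [Nat.card_eq_fintype_card, card_vector, Fintype.card_fin]

theorem stmt_11_general {i : ℕ} (hi : 2 ≤ i)
    (U2 : Machine 2) (hU2 : IsUniversal U2)
    (g : Str i → Str 2) (hg : GoedelNumbering Set.univ g) :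
    ∃ N : ℕ,
      (∀ n : ℕ, 1 ≤ n →
        {x : Str i | x.length = n ∧ rho1G U2 g x ≤ (N : ℝ≥0∞)} =
          {x : Str i | x.length = n}) ∧
      Filter.Tendsto
        (fun n : ℕ =>
          (Set.ncard {x : Str i | x.length = n ∧ rho1G U2 g x ≤ (N : ℝ≥0∞)} : ℝ)
            / (i : ℝ) ^ n)
        Filter.atTop (nhds 1) := by
  obtain ⟨N, hN⟩ := exists_Hc_le_mul_length (by omega) hU2 hg.1
  have hall : ∀ n : ℕ, {x : Str i | x.length = n ∧ rho1G U2 g x ≤ (N : ℝ≥0∞)} =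
      {x : Str i | x.length = n} := fun n =>
    Set.ext fun x => and_iff_left_of_imp fun _ => rho1G_le_of_Hc_le (hN x)
  refine ⟨N, fun n _ => hall n, tendsto_const_nhds.congr fun n => ?_⟩
  rw [hall, ncard_setOf_length_eq, Nat.cast_pow, div_self (by positivity)]

/-- For a Gödel numbering `g : Xᵢ* → X₂*` there is an integer `N` such that for every
`n ≥ 1` the set `{x : |x|ᵢ = n, ρ¹_g(x) ≤ N}` is all of `Xᵢⁿ`; in particular
`lim_{n→∞} i^{−n}·card{x : |x|ᵢ = n, ρ¹_g(x) ≤ N} = 1`, so `ρ¹_g` fails the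
density-vanishing condition. -/
theorem stmt_11 {i : ℕ} (hi : 2 ≤ i) (Ui : Machine i) (hUi : IsUniversal Ui)
    (U2 : Machine 2) (hU2 : IsUniversal U2)
    (g : Str i → Str 2) (hg : GoedelNumbering Set.univ g) :
    ∃ N : ℕ,
      (∀ n : ℕ, 1 ≤ n →
        {x : Str i | x.length = n ∧ rho1G U2 g x ≤ (N : ℝ≥0∞)} =
          {x : Str i | x.length = n}) ∧
      Filter.Tendsto
        (fun n : ℕ =>
          (Set.ncard {x : Str i | x.length = n ∧ rho1G U2 g x ≤ (N : ℝ≥0∞)} : ℝ)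
            / (i : ℝ) ^ n)
        Filter.atTop (nhds 1) :=
  stmt_11_general hi U2 hU2 g hg
end

section
/- Let g : X_i^* → X_2^* be a Gödel numbering. Then for every integer N, lim_{n→∞} i^{−n} · card{x ∈ X_i^* : |x|_i = n and ρ^2_g(x) ≤ N} = 0. -/
open scoped ENNReal

open Set Filter

section Aux

/-- Count of binary strings of length at most `m`. -/
lemma encard_length_le_aux (m : ℕ) :
    {l : List (Fin 2) | l.length ≤ m}.encard ≤ ((2 ^ (m + 1) - 1 : ℕ) : ℕ∞) := by
  induction m with
  | zero =>
    have h : {l : List (Fin 2) | l.length ≤ 0} = {([] : List (Fin 2))} := by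
      ext l; simp [List.length_eq_zero_iff]
    rw [h, Set.encard_singleton]
    norm_num
  | succ m ih =>
    have hsub : {l : List (Fin 2) | l.length ≤ m + 1} ⊆
        ({([] : List (Fin 2))} ∪ (List.cons (0 : Fin 2) '' {l : List (Fin 2) | l.length ≤ m})) ∪
          (List.cons (1 : Fin 2) '' {l : List (Fin 2) | l.length ≤ m}) := by
      intro l hl
      match l with
      | [] => exact Or.inl (Or.inl rfl)
      | a :: t =>
        have ht : t.length ≤ m := by simpa using hl
        fin_cases a
        · exact Or.inl (Or.inr ⟨t, ht, rfl⟩)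
        · exact Or.inr ⟨t, ht, rfl⟩
    have h1 : 1 ≤ 2 ^ (m + 1) := Nat.one_le_two_pow
    calc {l : List (Fin 2) | l.length ≤ m + 1}.encard
        ≤ (({([] : List (Fin 2))} ∪ (List.cons (0 : Fin 2) '' {l : List (Fin 2) | l.length ≤ m})) ∪
            (List.cons (1 : Fin 2) '' {l : List (Fin 2) | l.length ≤ m})).encard := Set.encard_mono hsub
      _ ≤ ({([] : List (Fin 2))} ∪ (List.cons (0 : Fin 2) '' {l : List (Fin 2) | l.length ≤ m})).encard
            + (List.cons (1 : Fin 2) '' {l : List (Fin 2) | l.length ≤ m}).encard := Set.encard_union_le _ _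
      _ ≤ (({([] : List (Fin 2))} : Set (List (Fin 2))).encard
            + (List.cons (0 : Fin 2) '' {l : List (Fin 2) | l.length ≤ m}).encard)
            + (List.cons (1 : Fin 2) '' {l : List (Fin 2) | l.length ≤ m}).encard := by
          gcongr
          exact Set.encard_union_le _ _
      _ ≤ (1 + ((2 ^ (m + 1) - 1 : ℕ) : ℕ∞)) + ((2 ^ (m + 1) - 1 : ℕ) : ℕ∞) := by
          gcongr
          · exact le_of_eq (Set.encard_singleton _)
          · exact (Set.encard_image_le _ _).trans ih
          · exact (Set.encard_image_le _ _).trans ih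
      _ ≤ ((2 ^ (m + 1 + 1) - 1 : ℕ) : ℕ∞) := by
          rw [show (1 : ℕ∞) = ((1 : ℕ) : ℕ∞) from rfl, ← Nat.cast_add, ← Nat.cast_add,
            Nat.cast_le]
          have : 2 ^ (m + 1 + 1) = 2 ^ (m + 1) + 2 ^ (m + 1) := by ring
          omega

/-- If `Hc T y ≤ m` then there is a program of length at most `m` producing `y`. -/
lemma exists_short_prog {i : ℕ} (T : Machine i) {y : Str i} {m : ℕ}
    (h : Hc T y ≤ (m : ℝ≥0∞)) : ∃ p : Str i, p.length ≤ m ∧ y ∈ T.f p := by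
  by_contra hc
  push_neg at hc
  have h1 : (((m + 1 : ℕ)) : ℝ≥0∞) ≤ Hc T y := by
    apply le_sInf
    rintro n ⟨p, rfl, hmem⟩
    have hp : m + 1 ≤ p.length := by
      by_contra hlt
      exact hc p (by omega) hmem
    exact_mod_cast hp
  have h2 : (((m + 1 : ℕ)) : ℝ≥0∞) ≤ ((m : ℕ) : ℝ≥0∞) := h1.trans h
  have : m + 1 ≤ m := by exact_mod_cast h2
  omega

/-- There are at most `2^(m+1)` binary strings of complexity at most `m`. -/
lemma encard_Hc_le (T : Machine 2) (m : ℕ) :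
    {y : Str 2 | Hc T y ≤ (m : ℝ≥0∞)}.encard ≤ ((2 ^ (m + 1) : ℕ) : ℕ∞) := by
  classical
  set S := {y : Str 2 | Hc T y ≤ (m : ℝ≥0∞)} with hS
  set F : Str 2 → Str 2 := fun y =>
    if h : ∃ p : Str 2, p.length ≤ m ∧ y ∈ T.f p then h.choose else [] with hF
  have hmem : ∀ y ∈ S, (F y).length ≤ m ∧ y ∈ T.f (F y) := by
    intro y hy
    have h := exists_short_prog T hy
    simp only [hF, dif_pos h]
    exact h.choose_spec
  have hinj : Set.InjOn F S := by
    intro y1 h1 y2 h2 he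
    have m1 := (hmem y1 h1).2
    have m2 := (hmem y2 h2).2
    rw [he] at m1
    exact Part.mem_unique m1 m2
  calc S.encard = (F '' S).encard := (hinj.encard_image).symm
    _ ≤ {l : List (Fin 2) | l.length ≤ m}.encard := by
        apply Set.encard_mono
        rintro _ ⟨y, hy, rfl⟩
        exact (hmem y hy).1
    _ ≤ ((2 ^ (m + 1) - 1 : ℕ) : ℕ∞) := encard_length_le_aux m
    _ ≤ ((2 ^ (m + 1) : ℕ) : ℕ∞) := by exact_mod_cast Nat.sub_le _ _

/-- `2 ^ ⌈logb i n⌉₊ ≤ 2 n` for `2 ≤ i`, `2 ≤ n`. -/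
lemma two_pow_ceil_logb_le {i n : ℕ} (hi : 2 ≤ i) (hn : 2 ≤ n) :
    (2 : ℝ) ^ (⌈Real.logb i (n : ℝ)⌉₊) ≤ 2 * n := by
  have hn1 : (1 : ℝ) < n := by exact_mod_cast (by omega : 1 < n)
  have hi1 : (1 : ℝ) < i := by exact_mod_cast (by omega : 1 < i)
  have hlog_nonneg : (0 : ℝ) ≤ Real.logb i n := (Real.logb_pos hi1 hn1).le
  have h1 : (⌈Real.logb i (n : ℝ)⌉₊ : ℝ) < Real.logb i n + 1 :=
    Nat.ceil_lt_add_one hlog_nonneg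
  have h2 : Real.logb i n ≤ Real.logb 2 n := by
    rw [Real.logb, Real.logb]
    exact div_le_div_of_nonneg_left (Real.log_nonneg hn1.le)
      (Real.log_pos (by norm_num))
      (Real.log_le_log (by norm_num) (by exact_mod_cast hi))
  have h3 : (⌈Real.logb i (n : ℝ)⌉₊ : ℝ) ≤ Real.logb 2 n + 1 := by linarith
  have h4 := Real.rpow_le_rpow_of_exponent_le (by norm_num : (1 : ℝ) ≤ 2) h3
  calc (2 : ℝ) ^ (⌈Real.logb i (n : ℝ)⌉₊)
      = (2 : ℝ) ^ ((⌈Real.logb i (n : ℝ)⌉₊ : ℝ)) := (Real.rpow_natCast _ _).symm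
    _ ≤ (2 : ℝ) ^ (Real.logb 2 n + 1) := h4
    _ = 2 * n := by
        rw [Real.rpow_add (by norm_num), Real.rpow_logb (by norm_num) (by norm_num)
          (by positivity), Real.rpow_one]
        ring

end Aux


/-- For a Gödel numbering `g : Xᵢ* → X₂*` and every integer `N`,
`lim_{n→∞} i^{−n}·card{x : |x|ᵢ = n, ρ²_g(x) ≤ N} = 0`. -/
theorem stmt_12 {i : ℕ} (hi : 2 ≤ i) (Ui : Machine i) (hUi : IsUniversal Ui)
    (U2 : Machine 2) (hU2 : IsUniversal U2)
    (g : Str i → Str 2) (hg : GoedelNumbering Set.univ g) :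
    ∀ N : ℤ,
      Filter.Tendsto
        (fun n : ℕ =>
          (Set.ncard {x : Str i | x.length = n ∧ rho2G U2 g x ≤ ENNReal.ofReal (N : ℝ)} : ℝ)
            / (i : ℝ) ^ n)
        Filter.atTop (nhds 0) := by
  intro N
  obtain ⟨hgc, hginj⟩ := hg
  set M := N.toNat with hM
  have hi1 : (1 : ℝ) < (i : ℝ) := by exact_mod_cast (by omega : 1 < i)
  have hr : ‖(i : ℝ)⁻¹‖ < 1 := by
    rw [Real.norm_eq_abs, abs_inv, abs_of_pos (by linarith)]
    rw [inv_lt_one_iff₀]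
    right; exact hi1
  have hb : Filter.Tendsto
      (fun n : ℕ => (2 * 2 ^ M : ℝ) * ((n : ℝ) ^ M * ((i : ℝ)⁻¹) ^ n))
      Filter.atTop (nhds 0) := by
    simpa using ((summable_pow_mul_geometric_of_norm_lt_one M hr).tendsto_atTop_zero).const_mul (2 * 2 ^ M : ℝ)
  apply squeeze_zero' ?_ ?_ hb
  · filter_upwards with n
    positivity
  · filter_upwards [Filter.eventually_ge_atTop 2] with n hn
    set S := {x : Str i | x.length = n ∧ rho2G U2 g x ≤ ENNReal.ofReal (N : ℝ)} with hSdef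
    set L := ⌈Real.logb i (n : ℝ)⌉₊ with hL
    -- encard bound
    have hLpos : 0 < L := by
      rw [hL]
      apply Nat.ceil_pos.mpr
      apply Real.logb_pos
      · exact_mod_cast (by omega : 1 < i)
      · exact_mod_cast (by omega : 1 < n)
    have himg : g '' S ⊆ {y : Str 2 | Hc U2 y ≤ ((M * L : ℕ) : ℝ≥0∞)} := by
      rintro _ ⟨x, ⟨hlen, hrho⟩, rfl⟩
      have hx1 : ¬ x.length ≤ 1 := by omega
      rw [rho2G, if_neg hx1, hlen] at hrho
      have hdiv := (ENNReal.div_le_iff (x := Hc U2 (g x))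
        (by exact_mod_cast hLpos.ne' : ((L : ℕ) : ℝ≥0∞) ≠ 0)
        (by simp : ((L : ℕ) : ℝ≥0∞) ≠ ⊤)).mp hrho
      have hNM : ENNReal.ofReal ((N : ℤ) : ℝ) ≤ ((M : ℕ) : ℝ≥0∞) := by
        calc ENNReal.ofReal ((N : ℤ) : ℝ) ≤ ENNReal.ofReal ((M : ℕ) : ℝ) := by
              apply ENNReal.ofReal_le_ofReal
              exact_mod_cast Int.self_le_toNat N
          _ = ((M : ℕ) : ℝ≥0∞) := ENNReal.ofReal_natCast M
      calc Hc U2 (g x) ≤ ENNReal.ofReal ((N : ℤ) : ℝ) * ((L : ℕ) : ℝ≥0∞) := hdiv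
        _ ≤ ((M : ℕ) : ℝ≥0∞) * ((L : ℕ) : ℝ≥0∞) := by gcongr
        _ = ((M * L : ℕ) : ℝ≥0∞) := by push_cast; ring
    have hgi : Set.InjOn g S := hginj.mono (Set.subset_univ S)
    have hencard : S.encard ≤ ((2 ^ (M * L + 1) : ℕ) : ℕ∞) := by
      calc S.encard = (g '' S).encard := hgi.encard_image.symm
        _ ≤ {y : Str 2 | Hc U2 y ≤ ((M * L : ℕ) : ℝ≥0∞)}.encard := Set.encard_mono himg
        _ ≤ _ := encard_Hc_le U2 (M * L)
    obtain ⟨hfin, n₀, hn₀, hn₀le⟩ := Set.encard_le_coe_iff.mp hencard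
    have hncard : S.ncard ≤ 2 ^ (M * L + 1) := by
      rw [Set.ncard, hn₀]
      simpa using hn₀le
    -- real bound
    have hreal : (S.ncard : ℝ) ≤ (2 * 2 ^ M : ℝ) * (n : ℝ) ^ M := by
      have h2L : (2 : ℝ) ^ L ≤ 2 * n := two_pow_ceil_logb_le hi hn
      calc (S.ncard : ℝ) ≤ ((2 ^ (M * L + 1) : ℕ) : ℝ) := by exact_mod_cast hncard
        _ = 2 * ((2 : ℝ) ^ L) ^ M := by
            push_cast
            rw [pow_succ, mul_comm M L, pow_mul]
            ring
        _ ≤ 2 * (2 * (n : ℝ)) ^ M := by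
            gcongr
        _ = (2 * 2 ^ M : ℝ) * (n : ℝ) ^ M := by rw [mul_pow]; ring
    have hipow : (0 : ℝ) < (i : ℝ) ^ n := by positivity
    calc (S.ncard : ℝ) / (i : ℝ) ^ n
        ≤ ((2 * 2 ^ M : ℝ) * (n : ℝ) ^ M) / (i : ℝ) ^ n := by gcongr
      _ = (2 * 2 ^ M : ℝ) * ((n : ℝ) ^ M * ((i : ℝ)⁻¹) ^ n) := by
          rw [div_eq_mul_inv, ← inv_pow]
          ring
end

section
/- Let g : X_i^* → X_2^* be a Gödel numbering and let T ⊆ X_i^* be a set for which there exist a real constant c > 0 and infinitely many n with card{x ∈ T : |x|_i = n} ≥ 2^{c·n}. Then for every integer N there exists x ∈ T with H_2(g(x)) > N·⌈log_i(|x|_i)⌉; that is, ρ^2_g is unbounded on T. -/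
open scoped ENNReal

/-!
A machine has at most one output per program and there are fewer than `2 ^ (K + 1)` binary
programs of length at most `K`, so fewer than `2 ^ (K + 1)` binary strings have complexity at
most `K`. Since `g` is injective, if `H₂(g x) ≤ K = N ⌈log_i n⌉` for every `x ∈ T` of length `n`,
then `T` has fewer than `2 ^ (K + 1)` strings of length `n`; but `K + 1 = O(log n)` is eventually
below `c n`.
-/

open Filter Asymptotics

lemma ncard_setOf_length_eq_s14 (α : Type*) [Fintype α] (j : ℕ) :
    {l : List α | l.length = j}.ncard = Fintype.card α ^ j := by
  rw [← Nat.card_coe_set_eq, ← card_vector, ← Nat.card_eq_fintype_card]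
  rfl

lemma ncard_setOf_length_le_lt {α : Type*} [Fintype α] (hα : 2 ≤ Fintype.card α) (K : ℕ) :
    {l : List α | l.length ≤ K}.ncard < Fintype.card α ^ (K + 1) :=
  calc {l : List α | l.length ≤ K}.ncard
      = (⋃ j ∈ Finset.range (K + 1), {l : List α | l.length = j}).ncard := by
        congr 1; ext l; simp
    _ ≤ ∑ j ∈ Finset.range (K + 1), {l : List α | l.length = j}.ncard :=
        Finset.set_ncard_biUnion_le _ _
    _ = ∑ j ∈ Finset.range (K + 1), Fintype.card α ^ j := by
        simp only [ncard_setOf_length_eq_s14]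
    _ < Fintype.card α ^ (K + 1) := Nat.geomSum_lt hα (by simp)

namespace Machine

variable {k : ℕ} (M : Machine k)

lemma exists_program_of_Hc_le {z : Str k} {K : ℕ} (h : Hc M z ≤ K) :
    ∃ y : Str k, y.length ≤ K ∧ z ∈ M.f y := by
  have hlt : Hc M z < (K + 1 : ℕ) := h.trans_lt (by exact_mod_cast K.lt_succ_self)
  obtain ⟨_, ⟨y, rfl, hy⟩, hlen⟩ := sInf_lt_iff.1 hlt
  exact ⟨y, Nat.lt_succ_iff.1 (by exact_mod_cast hlen), hy⟩

lemma exists_injOn_program (K : ℕ) : ∃ program : Str k → Str k,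
    Set.MapsTo program {z | Hc M z ≤ K} {y | y.length ≤ K} ∧
      Set.InjOn program {z | Hc M z ≤ K} := by
  choose! program hlen hmem using fun z (hz : Hc M z ≤ K) => M.exists_program_of_Hc_le hz
  exact ⟨program, hlen, fun z hz z' hz' heq => Part.mem_unique (hmem z hz) (heq ▸ hmem z' hz')⟩

lemma finite_setOf_Hc_le (K : ℕ) : {z | Hc M z ≤ K}.Finite :=
  let ⟨_, hmaps, hinj⟩ := M.exists_injOn_program K
  (List.finite_length_le _ K).of_injOn hmaps hinj

lemma ncard_setOf_Hc_le_lt (hk : 2 ≤ k) (K : ℕ) : {z | Hc M z ≤ K}.ncard < k ^ (K + 1) := by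
  obtain ⟨program, hmaps, hinj⟩ := M.exists_injOn_program K
  calc {z | Hc M z ≤ K}.ncard ≤ {y : Str k | y.length ≤ K}.ncard :=
        Set.ncard_le_ncard_of_injOn program hmaps hinj (List.finite_length_le _ K)
    _ < k ^ (K + 1) := by
        simpa using ncard_setOf_length_le_lt (α := Fin k) (by simpa using hk) K

end Machine

lemma eventually_mul_ceil_logb_add_one_le (i N : ℕ) {c : ℝ} (hc : 0 < c) :
    ∀ᶠ n : ℕ in atTop, ((N * ⌈Real.logb i n⌉₊ + 1 : ℕ) : ℝ) ≤ c * n := by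
  have hlittle : (fun x : ℝ => N * (Real.logb i x + 1) + 1) =o[atTop] id :=
    ((Real.isLittleO_log_id_atTop.const_mul_left (N / Real.log i)).add
      (isLittleO_const_id_atTop (N + 1 : ℝ))).congr_left fun x => by
        rw [Real.logb]; ring
  filter_upwards [hlittle.natCast_atTop.bound hc] with n hn
  have hlogb : 0 ≤ Real.logb i n :=
    div_nonneg (Real.log_natCast_nonneg n) (Real.log_natCast_nonneg i)
  have hceil : (⌈Real.logb i n⌉₊ : ℝ) ≤ Real.logb i n + 1 := (Nat.ceil_lt_add_one hlogb).le
  rw [Real.norm_of_nonneg (by positivity), id, Real.norm_natCast] at hn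
  push_cast
  nlinarith [(N.cast_nonneg : (0 : ℝ) ≤ N)]

theorem stmt_14_general {i : ℕ} (U2 : Machine 2)
    (g : Str i → Str 2) (hg : GoedelNumbering Set.univ g)
    (T : Set (Str i)) (c : ℝ) (hc : 0 < c)
    (hbig : ∀ m : ℕ, ∃ n : ℕ, m ≤ n ∧
      (2 : ℝ) ^ (c * (n : ℝ)) ≤ (Set.ncard {x : Str i | x ∈ T ∧ x.length = n} : ℝ)) :
    ∀ N : ℕ, ∃ x ∈ T,
      ((N * ⌈Real.logb i (x.length : ℝ)⌉₊ : ℕ) : ℝ≥0∞) < Hc U2 (g x) := by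
  intro N
  by_contra! hbounded
  obtain ⟨n, hmany, hK⟩ :=
    ((frequently_atTop.2 hbig).and_eventually (eventually_mul_ceil_logb_add_one_le i N hc)).exists
  set K := N * ⌈Real.logb i n⌉₊
  have hcount : {x | x ∈ T ∧ x.length = n}.ncard ≤ {z | Hc U2 z ≤ K}.ncard :=
    Set.ncard_le_ncard_of_injOn g (fun x ⟨hxT, hxn⟩ => by subst hxn; exact hbounded x hxT)
      (hg.2.mono (Set.subset_univ _)) (U2.finite_setOf_Hc_le K)
  refine lt_irrefl ((2 : ℝ) ^ (c * n)) ?_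
  calc (2 : ℝ) ^ (c * n) ≤ {x | x ∈ T ∧ x.length = n}.ncard := hmany
    _ < (2 : ℝ) ^ (K + 1) := by exact_mod_cast hcount.trans_lt (U2.ncard_setOf_Hc_le_lt le_rfl K)
    _ ≤ 2 ^ (c * n) := by
      rw [← Real.rpow_natCast]
      exact Real.rpow_le_rpow_of_exponent_le one_le_two (by exact_mod_cast hK)

/-- If `T ⊆ Xᵢ*` contains at least `2^{c·n}` strings of length `n` for some real
`c > 0` and infinitely many `n`, then for every integer `N` there is `x ∈ T` with
`H₂(g(x)) > N·⌈log_i(|x|ᵢ)⌉`; that is, `ρ²_g` is unbounded on `T`. -/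
theorem stmt_14 {i : ℕ} (hi : 2 ≤ i) (U2 : Machine 2) (hU2 : IsUniversal U2)
    (g : Str i → Str 2) (hg : GoedelNumbering Set.univ g)
    (T : Set (Str i)) (c : ℝ) (hc : 0 < c)
    (hbig : ∀ m : ℕ, ∃ n : ℕ, m ≤ n ∧
      (2 : ℝ) ^ (c * (n : ℝ)) ≤ (Set.ncard {x : Str i | x ∈ T ∧ x.length = n} : ℝ)) :
    ∀ N : ℕ, ∃ x ∈ T,
      ((N * ⌈Real.logb i (x.length : ℝ)⌉₊ : ℕ) : ℝ≥0∞) < Hc U2 (g x) :=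
  stmt_14_general U2 g hg T c hc hbig
end
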